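/- Every quantum configuration (O,C) in which all pairs of observables of O mutually commute is non-contextual. -/

import Mathlib

open scoped Classical
open Matrix

noncomputable section

/-- The space of `n`-qubit operators, realized as matrices indexed by
`Fin n → Fin 2` (the `n`-fold tensor-product index). -/
abbrev QMat (n : ℕ) := Matrix (Fin n → Fin 2) (Fin n → Fin 2) ℂ

/-- The four Pauli matrices `I, X, Y, Z`. -/
def pauliMat : Fin 4 → Matrix (Fin 2) (Fin 2) ℂ
  | ⟨0, _⟩ => 1
  | ⟨1, _⟩ => !![0, 1; 1, 0]
  | ⟨2, _⟩ => !![0, -Complex.I; Complex.I, 0]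
  | ⟨3, _⟩ => !![1, 0; 0, -1]

/-- The `n`-fold Kronecker (tensor) product `G₁ ⊗ ⋯ ⊗ Gₙ` of the Pauli matrices
selected by `g : Fin n → Fin 4`, as a matrix indexed by `Fin n → Fin 2`. -/
def nPauli {n : ℕ} (g : Fin n → Fin 4) : QMat n :=
  Matrix.of fun r c => ∏ k, pauliMat (g k) (r k) (c k)

/-- `M` is an `n`-qubit Pauli observable. -/
def IsPauliObs (n : ℕ) (M : QMat n) : Prop := ∃ g : Fin n → Fin 4, M = nPauli g

/-- `I^⊗n`, the `n`-fold tensor product of the identity. -/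
def idN (n : ℕ) : QMat n := nPauli (fun _ => ⟨0, by omega⟩)

/-- Product of `f` over a finite set of naturals, taken in increasing order
(well-defined without commutativity; agrees with the unordered product when the
factors pairwise commute). -/
def natFinsetProd {M : Type*} [Monoid M] (s : Finset ℕ) (f : ℕ → M) : M :=
  ((s.sort (· ≤ ·)).map f).prod

/-- `(V,H,G)` is a hypergram: `V` a nonempty finite vertex set, `H` a set of
nonempty hyperedges covering `V`, `G` a set of 2-element edges on `V` forming a
simple reduced graph, no edge of `G` being contained in a hyperedge of `H`. -/
def IsHypergram (V : Finset ℕ) (H G : Finset (Finset ℕ)) : Prop :=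
  V.Nonempty ∧
  (∀ h ∈ H, h ⊆ V ∧ h.Nonempty) ∧
  (∀ v ∈ V, ∃ h ∈ H, v ∈ h) ∧
  (∀ e ∈ G, e ⊆ V ∧ e.card = 2) ∧
  (∀ v ∈ V, ∃ e ∈ G, v ∈ e) ∧
  (∀ v ∈ V, ∀ w ∈ V,
    (∀ u ∈ V, (({v, u} : Finset ℕ) ∈ G ↔ ({w, u} : Finset ℕ) ∈ G)) → v = w) ∧
  (∀ e ∈ G, ∀ h ∈ H, ¬ e ⊆ h)

/-- `α` is an `n`-qubit Pauli assignment of the hypergram `(V,H,G)`. -/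
def IsPauliAssignment (V : Finset ℕ) (H G : Finset (Finset ℕ)) (n : ℕ)
    (α : ℕ → QMat n) : Prop :=
  (∀ v ∈ V, IsPauliObs n (α v)) ∧
  (∀ v ∈ V, α v ≠ idN n) ∧
  (∀ v₁ ∈ V, ∀ v₂ ∈ V, α v₁ = α v₂ → v₁ = v₂) ∧
  (∀ v₁ ∈ V, ∀ v₂ ∈ V, v₁ ≠ v₂ →
    (α v₁ * α v₂ = -(α v₂ * α v₁) ↔ ({v₁, v₂} : Finset ℕ) ∈ G)) ∧
  (∀ h ∈ H, natFinsetProd h α = idN n ∨ natFinsetProd h α = -(idN n))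

/-- The sign `sgn_α(h) ∈ {−1,1}` of a hyperedge `h`: `∏_{v∈h} α(v) = sgn_α(h)·I^⊗n`. -/
def quantumSgn {n : ℕ} (α : ℕ → QMat n) (h : Finset ℕ) : ℤ :=
  if natFinsetProd h α = idN n then 1 else -1

/-- The sign `sgn_a(h) = ∏_{v∈h} a(v)` of a hyperedge for a classical assignment. -/
def classicalSgn (a : ℕ → ℤ) (h : Finset ℕ) : ℤ := ∏ v ∈ h, a v

/-- The contextuality degree of a Pauli assignment: the minimum over classical
assignments `a : V → {−1,1}` of the number of hyperedges whose signs differ. -/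
def contextualityDegree {n : ℕ} (H : Finset (Finset ℕ)) (α : ℕ → QMat n) : ℕ :=
  sInf { d : ℕ | ∃ a : ℕ → ℤ, (∀ v, a v = 1 ∨ a v = -1) ∧
    d = (H.filter (fun h => quantumSgn α h ≠ classicalSgn a h)).card }

/-- The context (incidence) matrix of a hypergram over 𝔽₂. -/
def contextMatrix (V : Finset ℕ) (H : Finset (Finset ℕ)) :
    Matrix {h // h ∈ H} {v // v ∈ V} (ZMod 2) :=
  Matrix.of fun h v => if v.1 ∈ h.1 then 1 else 0

/-- The anticommutation (adjacency) matrix of a hypergram over 𝔽₂. -/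
def anticommMatrix (V : Finset ℕ) (G : Finset (Finset ℕ)) :
    Matrix {v // v ∈ V} {v // v ∈ V} (ZMod 2) :=
  Matrix.of fun i j => if ({i.1, j.1} : Finset ℕ) ∈ G then 1 else 0

/-- The standard symplectic form on `𝔽₂^{2n}`:
`⟨x,y⟩ = Σ_{k=1}^{n} (x_{2k−1} y_{2k} + x_{2k} y_{2k−1})`. -/
def sympForm (n : ℕ) (x y : Fin (2 * n) → ZMod 2) : ZMod 2 :=
  ∑ k : Fin n,
    (x ⟨2 * k.1, by have := k.2; omega⟩ * y ⟨2 * k.1 + 1, by have := k.2; omega⟩ +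
     x ⟨2 * k.1 + 1, by have := k.2; omega⟩ * y ⟨2 * k.1, by have := k.2; omega⟩)

/-- The single-qubit encoding `ψ(I)=(0,0), ψ(X)=(0,1), ψ(Y)=(1,1), ψ(Z)=(1,0)`. -/
def psi4 : Fin 4 → (ZMod 2) × (ZMod 2)
  | ⟨0, _⟩ => (0, 0)
  | ⟨1, _⟩ => (0, 1)
  | ⟨2, _⟩ => (1, 1)
  | ⟨3, _⟩ => (1, 0)

/-- The encoding `ψ` of an `n`-qubit Pauli observable (given by its tensor
factors `g`) as a vector of `𝔽₂^{2n}`, concatenating the per-factor encodings. -/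
def psiVec {n : ℕ} (g : Fin n → Fin 4) : Fin (2 * n) → ZMod 2 := fun idx =>
  if idx.1 % 2 = 0 then (psi4 (g ⟨idx.1 / 2, by have := idx.2; omega⟩)).1
  else (psi4 (g ⟨idx.1 / 2, by have := idx.2; omega⟩)).2

/-- All pairs of elements of `S` commute. -/
def PairComm {n : ℕ} (S : Finset (QMat n)) : Prop := ∀ a ∈ S, ∀ b ∈ S, a * b = b * a

/-- The (well-defined) product of a finite set of pairwise commuting matrices. -/
def commProd {n : ℕ} (S : Finset (QMat n)) (h : PairComm S) : QMat n :=
  S.noncommProd id (fun a ha b hb _ => h a ha b hb)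

/-- Pairwise commutation is inherited by subsets. -/
def pairCommOfSubset {n : ℕ} {S T : Finset (QMat n)} (hST : S ⊆ T) (h : PairComm T) :
    PairComm S := fun a ha b hb => h a (hST ha) b (hST hb)

/-- `Q` (pairwise commuting) is independent: no nonempty subset has product `±I^⊗n`. -/
def IsIndep {n : ℕ} (Q : Finset (QMat n)) (hQ : PairComm Q) : Prop :=
  ∀ S : Finset (QMat n), ∀ (hS : S ⊆ Q), S.Nonempty →
    commProd S (pairCommOfSubset hS hQ) ≠ idN n ∧
    commProd S (pairCommOfSubset hS hQ) ≠ -(idN n)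

/-- The vertex set `{1, …, 15}`. -/
def V15 : Finset ℕ := Finset.Icc 1 15

/-- The 15 lines of the doily. -/
def doilyLines : Finset (Finset ℕ) :=
  { {1,2,3}, {1,8,9}, {1,10,11}, {2,4,6}, {2,5,7}, {3,12,15}, {3,13,14},
    {4,8,12}, {4,10,14}, {5,8,13}, {5,10,15}, {6,9,15}, {6,11,13},
    {7,9,14}, {7,11,12} }

/-- The 10 lines of the two-spread `H_{2s}`. -/
def twoSpreadLines : Finset (Finset ℕ) :=
  { {1,2,3}, {1,10,11}, {2,4,6}, {3,13,14}, {4,8,12}, {5,8,13}, {5,10,15},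
    {6,9,15}, {7,9,14}, {7,11,12} }

/-- The anticommutation graph `G_d = G_{2s}`: pairs of distinct vertices not on a
common doily line. -/
def doilyG : Finset (Finset ℕ) :=
  (V15.powersetCard 2).filter (fun e => ∀ h ∈ doilyLines, ¬ e ⊆ h)

/-!
Commuting operators on a finite-dimensional complex space have a common eigenvector `v`.
A Pauli observable squares to the identity, so its eigenvalue on `v` is `±1`; take this
eigenvalue as its classical value. The product of the observables of a context then acts on
`v` both as the product of their values and, by hypothesis, as `s(c)`.
-/

namespace Module.End

variable {K V ι : Type*} [Field K] [AddCommGroup V] [Module K V]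

theorem eq_one_or_eq_neg_one_of_mul_self_eq_one {f : End K V} (hf : f * f = 1) {v : V}
    (hv : v ≠ 0) {μ : K} (hfv : f v = μ • v) : μ = 1 ∨ μ = -1 := by
  have hμμ : (μ * μ) • v = (1 : K) • v := by
    rw [mul_smul, ← hfv, ← map_smul, ← hfv, one_smul, ← mul_apply, hf, one_apply]
  exact mul_self_eq_one_iff.mp (smul_left_injective K hv hμμ)

variable [IsAlgClosed K] [FiniteDimensional K V]

theorem exists_mem_ne_zero_forall_apply_eq_smul_of_commute (s : Finset ι) (f : ι → End K V)
    (hcomm : ∀ i ∈ s, ∀ j ∈ s, Commute (f i) (f j)) (W : Submodule K V) (hW : W ≠ ⊥)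
    (hWf : ∀ i ∈ s, Set.MapsTo (f i) W W) :
    ∃ v ∈ W, v ≠ 0 ∧ ∃ μ : ι → K, ∀ i ∈ s, f i v = μ i • v := by
  classical
  induction s using Finset.induction_on generalizing W with
  | empty =>
    obtain ⟨v, hvW, hv⟩ := Submodule.exists_mem_ne_zero_of_ne_bot hW
    exact ⟨v, hvW, hv, 0, by simp⟩
  | insert a s has ih =>
    have : Nontrivial W := Submodule.nontrivial_iff_ne_bot.mpr hW
    obtain ⟨μa, hμa⟩ := exists_eigenvalue ((f a).restrict (hWf a (s.mem_insert_self a)))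
    obtain ⟨w, hw⟩ := hμa.exists_hasEigenvector
    -- `s` commutes with `f a`, so it preserves the `μa`-eigenspace of `f a` in `W`: recurse there
    let W' := W ⊓ (f a).eigenspace μa
    have hwW' : (w : V) ∈ W' :=
      ⟨w.2, mem_eigenspace_iff.mpr (congrArg Subtype.val hw.apply_eq_smul)⟩
    have hW' : W' ≠ ⊥ := fun h => hw.2 (by simpa [h] using hwW')
    have hW'f : ∀ i ∈ s, Set.MapsTo (f i) W' W' := fun i hi =>
      (hWf i (Finset.mem_insert_of_mem hi)).inter_inter
        (mapsTo_genEigenspace_of_comm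
          (hcomm a (s.mem_insert_self a) i (Finset.mem_insert_of_mem hi)) μa 1)
    obtain ⟨v, ⟨hvW, hva⟩, hv, μ, hμ⟩ := ih
      (fun i hi j hj => hcomm i (Finset.mem_insert_of_mem hi) j (Finset.mem_insert_of_mem hj))
      W' hW' hW'f
    refine ⟨v, hvW, hv, Function.update μ a μa, fun i hi => ?_⟩
    rcases Finset.mem_insert.mp hi with rfl | hi
    · simpa using mem_eigenspace_iff.mp hva
    · rw [Function.update_of_ne (ne_of_mem_of_not_mem hi has), hμ i hi]

theorem exists_ne_zero_forall_apply_eq_smul_of_commute [Nontrivial V] (s : Finset ι)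
    (f : ι → End K V) (hcomm : ∀ i ∈ s, ∀ j ∈ s, Commute (f i) (f j)) :
    ∃ v : V, v ≠ 0 ∧ ∃ μ : ι → K, ∀ i ∈ s, f i v = μ i • v := by
  obtain ⟨v, -, hv⟩ := exists_mem_ne_zero_forall_apply_eq_smul_of_commute s f hcomm ⊤
    top_ne_bot (fun _ _ => Set.mapsTo_univ _ _)
  exact ⟨v, hv⟩

end Module.End

theorem Finset.noncommProd_apply_eq_prod_smul {R M ι : Type*} [CommSemiring R] [AddCommMonoid M]
    [Module R M] (s : Finset ι) (f : ι → Module.End R M) (comm) {v : M} {μ : ι → R}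
    (h : ∀ i ∈ s, f i v = μ i • v) : s.noncommProd f comm v = (∏ i ∈ s, μ i) • v := by
  classical
  induction s using Finset.induction_on with
  | empty => simp
  | insert a s has ih =>
    rw [noncommProd_insert_of_notMem _ _ _ _ has, Module.End.mul_apply,
      ih (comm.mono (coe_subset.mpr (subset_insert a s))) (fun i hi => h i (mem_insert_of_mem hi)),
      map_smul, h a (mem_insert_self a s), smul_smul, prod_insert has, mul_comm]

theorem pauliMat_mul_self (a : Fin 4) : pauliMat a * pauliMat a = 1 := by
  fin_cases a <;> ext i j <;> fin_cases i <;> fin_cases j <;>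
    simp [pauliMat, Matrix.mul_apply, Fin.sum_univ_two]

theorem nPauli_mul {n : ℕ} (g g' : Fin n → Fin 4) :
    nPauli g * nPauli g' =
      Matrix.of fun r c => ∏ k, (pauliMat (g k) * pauliMat (g' k)) (r k) (c k) := by
  ext r c
  simp only [Matrix.mul_apply, nPauli, Matrix.of_apply, ← Finset.prod_mul_distrib]
  rw [Finset.prod_univ_sum, Fintype.piFinset_univ]

theorem nPauli_mul_self {n : ℕ} (g : Fin n → Fin 4) : nPauli g * nPauli g = idN n := by
  simp only [nPauli_mul, pauliMat_mul_self]
  rfl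

theorem idN_eq_one (n : ℕ) : idN n = 1 := by
  ext r c
  simp [idN, nPauli, pauliMat, Matrix.one_apply, Fintype.prod_boole, funext_iff]

theorem IsPauliObs.mul_self {n : ℕ} {M : QMat n} (hM : IsPauliObs n M) : M * M = 1 := by
  obtain ⟨g, rfl⟩ := hM
  rw [nPauli_mul_self, idN_eq_one]

theorem commutative_quantum_configuration_noncontextual_general
    (n : ℕ) (O : Finset (QMat n)) (C : Finset (Finset (QMat n)))
    (hObs : ∀ o ∈ O, IsPauliObs n o)
    (hcomm : PairComm O)
    (hCsub : ∀ c ∈ C, c ⊆ O)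
    (s : Finset (QMat n) → ℤ)
    (hprod : ∀ c (hc : c ∈ C),
      commProd c (pairCommOfSubset (hCsub c hc) hcomm) = (s c : ℂ) • idN n) :
    ∃ a : QMat n → ℤ, (∀ o ∈ O, a o = 1 ∨ a o = -1) ∧
      ∀ c ∈ C, (∏ o ∈ c, a o) = s c := by
  let φ : QMat n ≃ₐ[ℂ] Module.End ℂ ((Fin n → Fin 2) → ℂ) := Matrix.toLinAlgEquiv'
  obtain ⟨v, hv, μ, hμ⟩ := Module.End.exists_ne_zero_forall_apply_eq_smul_of_commute O (φ ·)
    fun o ho p hp => Commute.map (hcomm o ho p hp) φ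
  have hμ_sign (o : QMat n) (ho : o ∈ O) : μ o = 1 ∨ μ o = -1 :=
    Module.End.eq_one_or_eq_neg_one_of_mul_self_eq_one
      (by rw [← map_mul, (hObs o ho).mul_self, map_one]) hv (hμ o ho)
  refine ⟨fun o => if μ o = 1 then 1 else -1, fun o _ => by dsimp only; split_ifs <;> simp,
    fun c hc => ?_⟩
  have hμ_prod : (∏ o ∈ c, μ o) • v = (s c : ℂ) • v :=
    calc (∏ o ∈ c, μ o) • v = c.noncommProd (φ ·) _ v :=
          (Finset.noncommProd_apply_eq_prod_smul _ _ _ fun o ho => hμ o (hCsub c hc ho)).symm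
      _ = φ (commProd c (pairCommOfSubset (hCsub c hc) hcomm)) v :=
          (DFunLike.congr_fun (Finset.map_noncommProd c id _ φ) v).symm
      _ = (s c : ℂ) • v := by
          rw [hprod c hc, idN_eq_one, map_smul, map_one]
          rfl
  have hcast (o : QMat n) (ho : o ∈ c) : ((if μ o = 1 then 1 else -1 : ℤ) : ℂ) = μ o := by
    rcases hμ_sign o (hCsub c hc ho) with h | h <;> norm_num [h]
  exact_mod_cast (Finset.prod_congr rfl hcast).trans (smul_left_injective ℂ hv hμ_prod)

/-- Every commutative quantum configuration is non-contextual. -/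
theorem commutative_quantum_configuration_noncontextual
    (n : ℕ) (O : Finset (QMat n)) (C : Finset (Finset (QMat n)))
    (hO : O.Nonempty)
    (hObs : ∀ o ∈ O, IsPauliObs n o)
    (hneI : ∀ o ∈ O, o ≠ idN n)
    (hcomm : PairComm O)
    (hCsub : ∀ c ∈ C, c ⊆ O)
    (hCne : ∀ c ∈ C, c.Nonempty)
    (s : Finset (QMat n) → ℤ)
    (hs : ∀ c ∈ C, s c = 1 ∨ s c = -1)
    (hprod : ∀ c (hc : c ∈ C),
      commProd c (pairCommOfSubset (hCsub c hc) hcomm) = (s c : ℂ) • idN n) :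
    ∃ a : QMat n → ℤ, (∀ o ∈ O, a o = 1 ∨ a o = -1) ∧
      ∀ c ∈ C, (∏ o ∈ c, a o) = s c :=
  commutative_quantum_configuration_noncontextual_general n O C hObs hcomm hCsub s hprod

end
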